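/- arXiv:2203.04794 — 6 statements merged into one kernel-verified Lean document; each statement's English description precedes it below -/
import Mathlib

section
/- Let ρ₁, ρ₂ : (a,b) → ℝ be differentiable functions satisfying ρ₁' + ρ₁² ≤ ρ₂' + ρ₂² on (a,b). If ρ₁(t₀) ≥ ρ₂(t₀) for some t₀ ∈ (a,b), then ρ₁(t) ≥ ρ₂(t) for all t ∈ (a, t₀]. -/
/-!
The difference `u = ρ₁ - ρ₂` satisfies the linear differential inequality
`u' ≤ -(ρ₁ + ρ₂) u`. Multiplying by the integrating factor `exp F`, where `F` is a primitive
of `ρ₁ + ρ₂`, turns it into `(u exp F)' ≤ 0`, so `u exp F` is antitone and its sign at `t₀`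
propagates to the left of `t₀`.
-/

open Set Real

theorem exists_hasDerivAt_of_continuousOn_Ioo {a b : ℝ} {c : ℝ → ℝ}
    (hc : ContinuousOn c (Ioo a b)) : ∃ F : ℝ → ℝ, ∀ s ∈ Ioo a b, HasDerivAt F (c s) s := by
  rcases (Ioo a b).eq_empty_or_nonempty with hempty | ⟨t₀, ht₀⟩
  · exact ⟨0, by simp [hempty]⟩
  refine ⟨fun s => ∫ x in t₀..s, c x, fun s hs => ?_⟩
  have hint : IntervalIntegrable c MeasureTheory.volume t₀ s :=
    (hc.mono (ordConnected_Ioo.uIcc_subset ht₀ hs)).intervalIntegrable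
  exact intervalIntegral.integral_hasDerivAt_right hint
    (hc.stronglyMeasurableAtFilter isOpen_Ioo s hs) (hc.continuousAt (isOpen_Ioo.mem_nhds hs))

theorem antitoneOn_mul_exp_of_hasDerivAt {a b : ℝ} {u u' c F : ℝ → ℝ}
    (hu : ∀ t ∈ Ioo a b, HasDerivAt u (u' t) t) (hF : ∀ t ∈ Ioo a b, HasDerivAt F (c t) t)
    (hle : ∀ t ∈ Ioo a b, u' t + c t * u t ≤ 0) :
    AntitoneOn (fun t => u t * exp (F t)) (Ioo a b) := by
  have hderiv : ∀ t ∈ Ioo a b,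
      HasDerivAt (fun t => u t * exp (F t)) ((u' t + c t * u t) * exp (F t)) t :=
    fun t ht => ((hu t ht).mul (hF t ht).exp).congr_deriv (by ring)
  refine antitoneOn_of_hasDerivWithinAt_nonpos (f' := fun t => (u' t + c t * u t) * exp (F t))
    (convex_Ioo a b)
    (fun t ht => (hderiv t ht).continuousAt.continuousWithinAt) (fun t ht => ?_) (fun t ht => ?_)
  · rw [interior_Ioo] at ht
    exact (hderiv t ht).hasDerivWithinAt
  · rw [interior_Ioo] at ht
    exact mul_nonpos_of_nonpos_of_nonneg (hle t ht) (exp_pos _).le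

theorem nonneg_of_hasDerivAt_le_neg_mul {a b t₀ : ℝ} {u u' c : ℝ → ℝ}
    (hc : ContinuousOn c (Ioo a b)) (hu : ∀ t ∈ Ioo a b, HasDerivAt u (u' t) t)
    (hle : ∀ t ∈ Ioo a b, u' t ≤ -(c t * u t)) (ht₀ : t₀ ∈ Ioo a b) (h₀ : 0 ≤ u t₀) :
    ∀ t ∈ Ioc a t₀, 0 ≤ u t := by
  intro t ht
  obtain ⟨F, hF⟩ := exists_hasDerivAt_of_continuousOn_Ioo hc
  have hanti := antitoneOn_mul_exp_of_hasDerivAt hu hF fun s hs => by linarith [hle s hs]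
  have hmono : u t₀ * exp (F t₀) ≤ u t * exp (F t) :=
    hanti ⟨ht.1, ht.2.trans_lt ht₀.2⟩ ht₀ ht.2
  exact nonneg_of_mul_nonneg_left ((mul_nonneg h₀ (exp_pos _).le).trans hmono) (exp_pos _)

/-- Comparison lemma for Riccati differential inequalities. -/
theorem riccati_comparison (a b t₀ : ℝ) (ρ₁ ρ₂ ρ₁' ρ₂' : ℝ → ℝ)
    (hρ₁ : ∀ t ∈ Set.Ioo a b, HasDerivAt ρ₁ (ρ₁' t) t)
    (hρ₂ : ∀ t ∈ Set.Ioo a b, HasDerivAt ρ₂ (ρ₂' t) t)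
    (hineq : ∀ t ∈ Set.Ioo a b, ρ₁' t + (ρ₁ t) ^ 2 ≤ ρ₂' t + (ρ₂ t) ^ 2)
    (ht₀ : t₀ ∈ Set.Ioo a b) (h₀ : ρ₂ t₀ ≤ ρ₁ t₀) :
    ∀ t ∈ Set.Ioc a t₀, ρ₂ t ≤ ρ₁ t := by
  have hsum_cont : ContinuousOn (fun t => ρ₁ t + ρ₂ t) (Ioo a b) := fun t ht =>
    ((hρ₁ t ht).continuousAt.add (hρ₂ t ht).continuousAt).continuousWithinAt
  have hdiff_le : ∀ t ∈ Ioo a b,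
      ρ₁' t - ρ₂' t ≤ -((ρ₁ t + ρ₂ t) * (ρ₁ t - ρ₂ t)) := fun t ht => by
    linarith [hineq t ht]
  intro t ht
  exact sub_nonneg.mp <| nonneg_of_hasDerivAt_le_neg_mul hsum_cont
    (fun s hs => (hρ₁ s hs).sub (hρ₂ s hs)) hdiff_le ht₀ (sub_nonneg.mpr h₀) t ht
end

section
/- Fix κ ∈ ℝ and let f, g : [0,r] → ℝ≥0 be twice differentiable functions such that f'' + κf ≤ g'' + κg on [0,r], f(0) = g(0), and f'(0) ≤ g'(0). Then f ≤ g on [0, min(r, π_κ)], where π_κ = π/√κ if κ > 0 and π_κ = ∞ if κ ≤ 0. -/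
/-!
Put `h = g - f`, so `h'' + κ h ≥ 0`, `h 0 = 0` and `h' 0 ≥ 0`, and let `s = sn κ`, which is
positive on `(0, T)` for `T ≤ π_κ`. The Wronskian `h' s - h s'` has derivative
`(h'' + κ h) s ≥ 0` and vanishes at `0`, so it is nonnegative; hence `(h / s)' = (h' s - h s') / s²`
is nonnegative on `(0, T)`. Since `h / s → h' 0 / s' 0 ≥ 0` at `0⁺`, this gives `h ≥ 0` on
`(0, T)`, and at `T` by continuity.
-/

open Set Filter Topology Real

noncomputable def sn (κ t : ℝ) : ℝ :=
  if 0 < κ then sin (√κ * t) / √κ else if κ = 0 then t else sinh (√(-κ) * t) / √(-κ)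

noncomputable def cs (κ t : ℝ) : ℝ :=
  if 0 < κ then cos (√κ * t) else if κ = 0 then 1 else cosh (√(-κ) * t)

theorem sn_zero (κ : ℝ) : sn κ 0 = 0 := by
  unfold sn; split_ifs <;> simp

theorem cs_zero (κ : ℝ) : cs κ 0 = 1 := by
  unfold cs; split_ifs <;> simp

theorem hasDerivAt_sn (κ t : ℝ) : HasDerivAt (sn κ) (cs κ t) t := by
  rcases lt_trichotomy κ 0 with hκ | rfl | hκ
  · have hc : √(-κ) ≠ 0 := (sqrt_pos.2 (neg_pos.2 hκ)).ne'
    have hsn : sn κ = fun t => sinh (√(-κ) * t) / √(-κ) := by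
      funext t; simp [sn, hκ.not_gt, hκ.ne]
    rw [hsn, cs, if_neg hκ.not_gt, if_neg hκ.ne]
    exact ((((hasDerivAt_id' t).const_mul √(-κ)).sinh).div_const √(-κ)).congr_deriv (by field_simp)
  · have hsn : sn 0 = id := funext fun t => by simp [sn]
    simpa [hsn, cs] using hasDerivAt_id t
  · have hc : √κ ≠ 0 := (sqrt_pos.2 hκ).ne'
    have hsn : sn κ = fun t => sin (√κ * t) / √κ := funext fun t => if_pos hκ
    rw [hsn, cs, if_pos hκ]
    exact ((((hasDerivAt_id' t).const_mul √κ).sin).div_const √κ).congr_deriv (by field_simp)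

theorem hasDerivAt_cs (κ t : ℝ) : HasDerivAt (cs κ) (-κ * sn κ t) t := by
  rcases lt_trichotomy κ 0 with hκ | rfl | hκ
  · have hc : √(-κ) ≠ 0 := (sqrt_pos.2 (neg_pos.2 hκ)).ne'
    have hcs : cs κ = fun t => cosh (√(-κ) * t) := by
      funext t; simp [cs, hκ.not_gt, hκ.ne]
    rw [hcs, sn, if_neg hκ.not_gt, if_neg hκ.ne]
    refine (((hasDerivAt_id' t).const_mul √(-κ)).cosh).congr_deriv ?_
    field_simp
    rw [sq_sqrt (neg_nonneg.2 hκ.le)]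
    ring
  · have hcs : cs 0 = fun _ => 1 := funext fun t => by simp [cs]
    simpa [hcs] using hasDerivAt_const t (1 : ℝ)
  · have hc : √κ ≠ 0 := (sqrt_pos.2 hκ).ne'
    have hcs : cs κ = fun t => cos (√κ * t) := funext fun t => if_pos hκ
    rw [hcs, sn, if_pos hκ]
    refine (((hasDerivAt_id' t).const_mul √κ).cos).congr_deriv ?_
    field_simp
    rw [sq_sqrt hκ.le]
    ring

theorem sn_pos {κ t : ℝ} (ht : 0 < t) (htπ : 0 < κ → t < π / √κ) : 0 < sn κ t := by
  rcases lt_trichotomy κ 0 with hκ | rfl | hκ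
  · have hc : 0 < √(-κ) := sqrt_pos.2 (neg_pos.2 hκ)
    rw [sn, if_neg hκ.not_gt, if_neg hκ.ne]
    exact div_pos (sinh_pos_iff.2 (mul_pos hc ht)) hc
  · simpa [sn] using ht
  · have hc : 0 < √κ := sqrt_pos.2 hκ
    rw [sn, if_pos hκ]
    refine div_pos (sin_pos_of_pos_of_lt_pi (mul_pos hc ht) ?_) hc
    rw [← lt_div_iff₀' hc]
    exact htπ hκ

theorem monotoneOn_of_hasDerivAt_nonneg {D : Set ℝ} (hD : Convex ℝ D) {f f' : ℝ → ℝ}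
    (hf : ∀ x ∈ D, HasDerivAt f (f' x) x) (hf' : ∀ x ∈ interior D, 0 ≤ f' x) :
    MonotoneOn f D :=
  monotoneOn_of_hasDerivWithinAt_nonneg hD (fun x hx => (hf x hx).continuousAt.continuousWithinAt)
    (fun x hx => (hf x (interior_subset hx)).hasDerivWithinAt) hf'

theorem monotoneOn_wronskian {κ : ℝ} {D : Set ℝ} (hD : Convex ℝ D) {h h' h'' s s' : ℝ → ℝ}
    (hh : ∀ t ∈ D, HasDerivAt h (h' t) t) (hh' : ∀ t ∈ D, HasDerivAt h' (h'' t) t)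
    (hs : ∀ t ∈ D, HasDerivAt s (s' t) t) (hs' : ∀ t ∈ D, HasDerivAt s' (-κ * s t) t)
    (hsuper : ∀ t ∈ interior D, 0 ≤ h'' t + κ * h t) (hs_nonneg : ∀ t ∈ interior D, 0 ≤ s t) :
    MonotoneOn (fun t => h' t * s t - h t * s' t) D :=
  monotoneOn_of_hasDerivAt_nonneg hD
    (fun t ht => (((hh' t ht).mul (hs t ht)).sub ((hh t ht).mul (hs' t ht))).congr_deriv
      (show _ = (h'' t + κ * h t) * s t by ring))
    (fun t ht => mul_nonneg (hsuper t ht) (hs_nonneg t ht))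

theorem tendsto_div_of_hasDerivAt_of_eq_zero {h s : ℝ → ℝ} {x a b : ℝ} (hh : HasDerivAt h a x)
    (hs : HasDerivAt s b x) (hx : h x = 0) (hsx : s x = 0) (hb : b ≠ 0) :
    Tendsto (fun t => h t / s t) (𝓝[≠] x) (𝓝 (a / b)) := by
  refine (hh.tendsto_slope.div hs.tendsto_slope hb).congr' ?_
  filter_upwards [self_mem_nhdsWithin] with t ht
  have ht' : t - x ≠ 0 := sub_ne_zero.2 ht
  simp only [Pi.div_apply, slope_def_field, hx, hsx, sub_zero]
  field_simp

theorem nonneg_of_supersolution {κ T : ℝ} (hT : 0 < T) {h h' h'' s s' : ℝ → ℝ}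
    (hh : ∀ t ∈ Icc 0 T, HasDerivAt h (h' t) t) (hh' : ∀ t ∈ Icc 0 T, HasDerivAt h' (h'' t) t)
    (hs : ∀ t ∈ Icc 0 T, HasDerivAt s (s' t) t) (hs' : ∀ t ∈ Icc 0 T, HasDerivAt s' (-κ * s t) t)
    (hsuper : ∀ t ∈ Icc 0 T, 0 ≤ h'' t + κ * h t) (h_zero : h 0 = 0) (h'_zero : 0 ≤ h' 0)
    (s_zero : s 0 = 0) (s'_zero : 0 < s' 0) (hs_pos : ∀ t ∈ Ioo 0 T, 0 < s t) :
    0 ≤ h T := by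
  have hIoo : Ioo 0 T ⊆ Icc 0 T := Ioo_subset_Icc_self
  have hwronskian : ∀ t ∈ Icc 0 T, 0 ≤ h' t * s t - h t * s' t := by
    intro t ht
    have hmono := monotoneOn_wronskian (convex_Icc 0 T) hh hh' hs hs'
      (fun t ht => hsuper t (interior_subset ht))
      (fun t ht => (hs_pos t (by rwa [interior_Icc] at ht)).le)
    simpa [h_zero, s_zero] using hmono (left_mem_Icc.2 hT.le) ht ht.1
  have hquot : MonotoneOn (fun t => h t / s t) (Ioo 0 T) :=
    monotoneOn_of_hasDerivAt_nonneg (convex_Ioo 0 T)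
      (fun t ht => (hh t (hIoo ht)).div (hs t (hIoo ht)) (hs_pos t ht).ne')
      (fun t ht => div_nonneg (hwronskian t (hIoo (interior_subset ht))) (sq_nonneg _))
  have hlim : Tendsto (fun t => h t / s t) (𝓝[>] 0) (𝓝 (h' 0 / s' 0)) :=
    (tendsto_div_of_hasDerivAt_of_eq_zero (hh 0 (left_mem_Icc.2 hT.le))
      (hs 0 (left_mem_Icc.2 hT.le)) h_zero s_zero s'_zero.ne').mono_left
      (nhdsWithin_mono 0 fun t ht => ne_of_gt ht)
  have hquot_nonneg : ∀ t ∈ Ioo 0 T, 0 ≤ h t / s t := by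
    intro t ht
    refine (div_nonneg h'_zero s'_zero.le).trans (le_of_tendsto hlim ?_)
    filter_upwards [Ioo_mem_nhdsGT ht.1] with u hu
    exact hquot ⟨hu.1, hu.2.trans ht.2⟩ ht hu.2.le
  refine ContinuousWithinAt.closure_le (f := fun _ => 0) (s := Ioo 0 T)
    (by rw [closure_Ioo hT.ne]; exact right_mem_Icc.2 hT.le) continuousWithinAt_const
    (hh T (right_mem_Icc.2 hT.le)).continuousAt.continuousWithinAt fun t ht => ?_
  simpa using (le_div_iff₀ (hs_pos t ht)).1 (hquot_nonneg t ht)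

theorem jacobi_comparison_general (κ r : ℝ)
    (f g f' g' f'' g'' : ℝ → ℝ)
    (hf1 : ∀ t ∈ Set.Icc 0 r, HasDerivAt f (f' t) t)
    (hf2 : ∀ t ∈ Set.Icc 0 r, HasDerivAt f' (f'' t) t)
    (hg1 : ∀ t ∈ Set.Icc 0 r, HasDerivAt g (g' t) t)
    (hg2 : ∀ t ∈ Set.Icc 0 r, HasDerivAt g' (g'' t) t)
    (hineq : ∀ t ∈ Set.Icc 0 r, f'' t + κ * f t ≤ g'' t + κ * g t)
    (h0 : f 0 = g 0) (h0' : f' 0 ≤ g' 0) :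
    ∀ t ∈ Set.Icc 0 r, (0 < κ → t ≤ Real.pi / Real.sqrt κ) → f t ≤ g t := by
  intro t ht htπ
  rcases ht.1.eq_or_lt with rfl | ht_pos
  · exact h0.le
  have hsub : Icc 0 t ⊆ Icc 0 r := Icc_subset_Icc_right ht.2
  rw [← sub_nonneg]
  exact nonneg_of_supersolution ht_pos (h := g - f) (h' := g' - f') (h'' := g'' - f'')
    (fun u hu => (hg1 u (hsub hu)).sub (hf1 u (hsub hu)))
    (fun u hu => (hg2 u (hsub hu)).sub (hf2 u (hsub hu)))
    (fun u _ => hasDerivAt_sn κ u) (fun u _ => hasDerivAt_cs κ u)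
    (fun u hu => by simp only [Pi.sub_apply]; linarith [hineq u (hsub hu)])
    (by simp [h0]) (by simp [h0']) (sn_zero κ) (by simp [cs_zero])
    (fun u hu => sn_pos hu.1 fun hκ => hu.2.trans_le (htπ hκ))

/-- Jacobi comparison lemma: if `f'' + κ f ≤ g'' + κ g` on `[0, r]`, with
`f, g ≥ 0`, `f 0 = g 0` and `f' 0 ≤ g' 0`, then `f ≤ g` on `[0, min r π_κ]`,
where `π_κ = π / √κ` when `κ > 0` and `π_κ = ∞` otherwise. -/
theorem jacobi_comparison (κ r : ℝ) (hr : 0 < r)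
    (f g f' g' f'' g'' : ℝ → ℝ)
    (hf0 : ∀ t ∈ Set.Icc 0 r, 0 ≤ f t) (hg0 : ∀ t ∈ Set.Icc 0 r, 0 ≤ g t)
    (hf1 : ∀ t ∈ Set.Icc 0 r, HasDerivAt f (f' t) t)
    (hf2 : ∀ t ∈ Set.Icc 0 r, HasDerivAt f' (f'' t) t)
    (hg1 : ∀ t ∈ Set.Icc 0 r, HasDerivAt g (g' t) t)
    (hg2 : ∀ t ∈ Set.Icc 0 r, HasDerivAt g' (g'' t) t)
    (hineq : ∀ t ∈ Set.Icc 0 r, f'' t + κ * f t ≤ g'' t + κ * g t)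
    (h0 : f 0 = g 0) (h0' : f' 0 ≤ g' 0) :
    ∀ t ∈ Set.Icc 0 r, (0 < κ → t ≤ Real.pi / Real.sqrt κ) → f t ≤ g t :=
  jacobi_comparison_general κ r f g f' g' f'' g'' hf1 hf2 hg1 hg2 hineq h0 h0'
end

section
/- Let ρ : (0,b) → ℝ be differentiable with ρ' + ρ² ≤ -κ for a fixed κ ∈ ℝ. Then ρ(t) ≤ ct_κ(t) for all t ∈ (0,b), and moreover b ≤ π_κ. -/
/-!
For any solution `y` of `y'' + κ y = 0`, the quantity `ρ y² - y' y` is nonincreasing wherever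
`ρ' + ρ² ≤ -κ`, since its derivative is at most `-(ρ y - y')²`. For `y = sn_κ (· - a)` the quantity
vanishes at `a`, so `ρ t · sn_κ u ≤ sn_κ' u` whenever `0 < u < t` and `sn_κ u > 0` (take `a = t - u`). Letting `u → t` gives
`ρ ≤ ct_κ`, and if `b > π / √κ`, letting `u → π / √κ` for some `t > π / √κ` gives `0 ≤ -1`.
-/

/-- The generalised sine function `sn_κ`: the solution of `x'' + κ x = 0`,
`x 0 = 0`, `x' 0 = 1`. -/
noncomputable def snK (κ t : ℝ) : ℝ :=
  if 0 < κ then Real.sin (Real.sqrt κ * t) / Real.sqrt κ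
  else if κ = 0 then t
  else Real.sinh (Real.sqrt (-κ) * t) / Real.sqrt (-κ)

/-- The derivative `sn_κ'` of the generalised sine function. -/
noncomputable def snK' (κ t : ℝ) : ℝ :=
  if 0 < κ then Real.cos (Real.sqrt κ * t)
  else if κ = 0 then 1
  else Real.cosh (Real.sqrt (-κ) * t)

/-- The generalised cotangent `ct_κ = sn_κ' / sn_κ`. -/
noncomputable def ctK (κ t : ℝ) : ℝ := snK' κ t / snK κ t

open Set

lemma hasDerivAt_snK (κ t : ℝ) : HasDerivAt (snK κ) (snK' κ t) t := by
  unfold snK snK'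
  rcases lt_trichotomy κ 0 with h | rfl | h
  · have hs : Real.sqrt (-κ) ≠ 0 := (Real.sqrt_pos.2 (neg_pos.2 h)).ne'
    simp only [if_neg h.not_gt, if_neg h.ne]
    refine (((Real.hasDerivAt_sinh _).comp t ((hasDerivAt_id' t).const_mul _)).div_const _).congr_deriv ?_
    field_simp
  · simpa using hasDerivAt_id' t
  · have hs : Real.sqrt κ ≠ 0 := (Real.sqrt_pos.2 h).ne'
    simp only [if_pos h]
    refine (((Real.hasDerivAt_sin _).comp t ((hasDerivAt_id' t).const_mul _)).div_const _).congr_deriv ?_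
    field_simp
lemma hasDerivAt_snK' (κ t : ℝ) : HasDerivAt (snK' κ) (-(κ * snK κ t)) t := by
  unfold snK snK'
  rcases lt_trichotomy κ 0 with h | rfl | h
  · have hs : Real.sqrt (-κ) ≠ 0 := (Real.sqrt_pos.2 (neg_pos.2 h)).ne'
    have hκ : Real.sqrt (-κ) * Real.sqrt (-κ) = -κ := Real.mul_self_sqrt (neg_nonneg.2 h.le)
    simp only [if_neg h.not_gt, if_neg h.ne]
    refine ((Real.hasDerivAt_cosh _).comp t ((hasDerivAt_id' t).const_mul _)).congr_deriv ?_
    field_simp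
    linear_combination Real.sinh (Real.sqrt (-κ) * t) * hκ
  · simpa using hasDerivAt_const t (1 : ℝ)
  · have hs : Real.sqrt κ ≠ 0 := (Real.sqrt_pos.2 h).ne'
    have hκ : Real.sqrt κ * Real.sqrt κ = κ := Real.mul_self_sqrt h.le
    simp only [if_pos h]
    refine ((Real.hasDerivAt_cos _).comp t ((hasDerivAt_id' t).const_mul _)).congr_deriv ?_
    field_simp
    linear_combination -Real.sin (Real.sqrt κ * t) * hκ

lemma continuous_snK (κ : ℝ) : Continuous (snK κ) :=
  continuous_iff_continuousAt.2 fun t ↦ (hasDerivAt_snK κ t).continuousAt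

lemma continuous_snK' (κ : ℝ) : Continuous (snK' κ) :=
  continuous_iff_continuousAt.2 fun t ↦ (hasDerivAt_snK' κ t).continuousAt

lemma snK_zero (κ : ℝ) : snK κ 0 = 0 := by
  unfold snK; split_ifs <;> simp

lemma snK_pi_div_sqrt {κ : ℝ} (hκ : 0 < κ) : snK κ (Real.pi / Real.sqrt κ) = 0 := by
  simp [snK, hκ, mul_div_cancel₀ _ (Real.sqrt_pos.2 hκ).ne']

lemma snK'_pi_div_sqrt {κ : ℝ} (hκ : 0 < κ) : snK' κ (Real.pi / Real.sqrt κ) = -1 := by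
  simp [snK', hκ, mul_div_cancel₀ _ (Real.sqrt_pos.2 hκ).ne']

lemma snK_pos {κ t : ℝ} (ht : 0 < t) (htκ : 0 < κ → t < Real.pi / Real.sqrt κ) :
    0 < snK κ t := by
  unfold snK
  rcases lt_trichotomy κ 0 with h | rfl | h
  · have hs : 0 < Real.sqrt (-κ) := Real.sqrt_pos.2 (neg_pos.2 h)
    simp only [if_neg h.not_gt, if_neg h.ne]
    exact div_pos (Real.sinh_pos_iff.2 (by positivity)) hs
  · simpa using ht
  · have hs : 0 < Real.sqrt κ := Real.sqrt_pos.2 h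
    simp only [if_pos h]
    refine div_pos (Real.sin_pos_of_pos_of_lt_pi (by positivity) ?_) hs
    rw [← lt_div_iff₀' hs]
    exact htκ h

lemma antitoneOn_mul_sq_sub_mul_of_riccati {κ : ℝ} {D : Set ℝ} (hD : Convex ℝ D)
    {ρ ρ' y y' : ℝ → ℝ} (hρ : ∀ t ∈ D, HasDerivAt ρ (ρ' t) t)
    (hy : ∀ t ∈ D, HasDerivAt y (y' t) t) (hy' : ∀ t ∈ D, HasDerivAt y' (-(κ * y t)) t)
    (hineq : ∀ t ∈ D, ρ' t + ρ t ^ 2 ≤ -κ) :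
    AntitoneOn (fun t ↦ ρ t * y t ^ 2 - y' t * y t) D := by
  have hderiv : ∀ t ∈ D, HasDerivAt (fun t ↦ ρ t * y t ^ 2 - y' t * y t)
      (ρ' t * y t ^ 2 + ρ t * (2 * y t * y' t) - (-(κ * y t) * y t + y' t * y' t)) t := by
    intro t ht
    have hy2 : HasDerivAt (fun t ↦ y t ^ 2) (2 * y t * y' t) t :=
      ((hy t ht).pow 2).congr_deriv (by ring)
    exact ((hρ t ht).mul hy2).sub ((hy' t ht).mul (hy t ht))
  refine antitoneOn_of_hasDerivWithinAt_nonpos hD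
    (fun t ht ↦ (hderiv t ht).continuousAt.continuousWithinAt)
    (fun t ht ↦ (hderiv t (interior_subset ht)).hasDerivWithinAt) fun t ht ↦ ?_
  have hineq_t := hineq t (interior_subset ht)
  nlinarith [sq_nonneg (y t), sq_nonneg (ρ t * y t - y' t)]

section Riccati

variable {κ b : ℝ} {ρ ρ' : ℝ → ℝ}

lemma mul_snK_le_snK'_of_riccati_of_lt (hderiv : ∀ t ∈ Ioo 0 b, HasDerivAt ρ (ρ' t) t)
    (hineq : ∀ t ∈ Ioo 0 b, ρ' t + ρ t ^ 2 ≤ -κ) {t u : ℝ} (ht : t ∈ Ioo 0 b) (hu : u ∈ Ioo 0 t)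
    (hsn : 0 < snK κ u) : ρ t * snK κ u ≤ snK' κ u := by
  set a := t - u
  have ha : a ∈ Ioo 0 b := ⟨by linarith [hu.2], by linarith [hu.1, ht.2]⟩
  have hanti := antitoneOn_mul_sq_sub_mul_of_riccati (convex_Ioo 0 b) hderiv
    (fun s _ ↦ (hasDerivAt_snK κ (s - a)).comp_sub_const s a)
    (fun s _ ↦ (hasDerivAt_snK' κ (s - a)).comp_sub_const s a) hineq ha ht (by linarith [hu.1])
  have hta : t - a = u := sub_sub_cancel t u
  simp only [sub_self, snK_zero, hta] at hanti
  have hprod : (ρ t * snK κ u - snK' κ u) * snK κ u ≤ 0 := by linear_combination hanti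
  exact sub_nonpos.1 (nonpos_of_mul_nonpos_left hprod hsn)

lemma mul_snK_le_snK'_of_riccati (hderiv : ∀ t ∈ Ioo 0 b, HasDerivAt ρ (ρ' t) t)
    (hineq : ∀ t ∈ Ioo 0 b, ρ' t + ρ t ^ 2 ≤ -κ) {t c : ℝ} (ht : t ∈ Ioo 0 b) (hc₀ : 0 < c)
    (hct : c ≤ t) (hsn : ∀ u ∈ Ioo 0 c, 0 < snK κ u) : ρ t * snK κ c ≤ snK' κ c := by
  have hclosed : IsClosed {u | ρ t * snK κ u ≤ snK' κ u} :=
    isClosed_le (continuous_const.mul (continuous_snK κ)) (continuous_snK' κ)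
  have hsub : Ioo 0 c ⊆ {u | ρ t * snK κ u ≤ snK' κ u} := fun u hu ↦
    mul_snK_le_snK'_of_riccati_of_lt hderiv hineq ht ⟨hu.1, hu.2.trans_le hct⟩ (hsn u hu)
  exact hclosed.closure_subset_iff.2 hsub (by simpa [closure_Ioo hc₀.ne] using hc₀.le)

end Riccati

theorem riccati_comparison_upper_general (κ b : ℝ) (ρ ρ' : ℝ → ℝ)
    (hderiv : ∀ t ∈ Set.Ioo 0 b, HasDerivAt ρ (ρ' t) t)
    (hineq : ∀ t ∈ Set.Ioo 0 b, ρ' t + (ρ t) ^ 2 ≤ -κ) :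
    (∀ t ∈ Set.Ioo 0 b, ρ t ≤ ctK κ t) ∧ (0 < κ → b ≤ Real.pi / Real.sqrt κ) := by
  have hb_le : 0 < κ → b ≤ Real.pi / Real.sqrt κ := by
    intro hκ
    by_contra! hlt
    set T := Real.pi / Real.sqrt κ
    have hT : 0 < T := by positivity
    have key := mul_snK_le_snK'_of_riccati hderiv hineq
      (t := (T + b) / 2) ⟨by linarith, by linarith⟩ hT (by linarith)
      fun u hu ↦ snK_pos hu.1 fun _ ↦ hu.2
    rw [snK_pi_div_sqrt hκ, snK'_pi_div_sqrt hκ] at key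
    linarith
  refine ⟨fun t ht ↦ ?_, hb_le⟩
  have hsn : ∀ u, 0 < u → u ≤ t → 0 < snK κ u := fun u hu hut ↦
    snK_pos hu fun hκ ↦ (hut.trans_lt ht.2).trans_le (hb_le hκ)
  rw [ctK, le_div_iff₀ (hsn t ht.1 le_rfl)]
  exact mul_snK_le_snK'_of_riccati hderiv hineq ht ht.1 le_rfl
    fun u hu ↦ hsn u hu.1 hu.2.le

/-- Riccati comparison estimate, first part: if `ρ' + ρ² ≤ -κ` on `(0, b)`, then
`ρ ≤ ct_κ` on `(0, b)`; moreover `b ≤ π_κ` (which is `π / √κ` for `κ > 0` and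
`∞` otherwise). -/
theorem riccati_comparison_upper (κ b : ℝ) (hb : 0 < b) (ρ ρ' : ℝ → ℝ)
    (hderiv : ∀ t ∈ Set.Ioo 0 b, HasDerivAt ρ (ρ' t) t)
    (hineq : ∀ t ∈ Set.Ioo 0 b, ρ' t + (ρ t) ^ 2 ≤ -κ) :
    (∀ t ∈ Set.Ioo 0 b, ρ t ≤ ctK κ t) ∧ (0 < κ → b ≤ Real.pi / Real.sqrt κ) :=
  riccati_comparison_upper_general κ b ρ ρ' hderiv hineq
end

section
/- For all skew-symmetric real matrices A, B of size n×n, the Frobenius norm of the commutator satisfies ‖AB − BA‖_F ≤ ‖A‖_F · ‖B‖_F. -/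
/-!
Complexify and diagonalise the Hermitian matrix `H = i A` as `H U = U D`, `D = diag μ`, with `U`
unitary, and put `b = Uᴴ B U`. Conjugation by `U` preserves the Frobenius norm, so
`‖[A, B]‖² = ∑ (μ j - μ k)² |b j k|²`, `‖A‖² = ∑ μ²` and `‖B‖² = ∑ |b j k|²`; it suffices that
`(μ j - μ k)² ≤ ∑ μ²` whenever `b j k ≠ 0`.

Since `A` is real, complex conjugation maps `μ`-eigenvectors of `H` to `(-μ)`-eigenvectors, so the
spectrum of `H` is symmetric. If `μ j` and `μ k` have the same sign, the terms `μ j²` and `μ k²` of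
`∑ μ²` suffice. If they have opposite signs and `μ k ≠ -μ j`, the eigenvalues `-μ j` and `-μ k`
supply two more terms; if `μ k = -μ j` and both are multiple eigenvalues, their repetitions do.
Finally, if `μ j` is simple (and symmetrically `μ k`, as `bᴴ = -b`), then the column `u k` of `U` is
a multiple of `conj (u j)`, so `b j k = (conj u j)ᵀ B u k` is a multiple of
`(conj u j)ᵀ B (conj u j) = 0`, because `B` is skew-symmetric.
-/

open Matrix

/-- The Frobenius norm of a real square matrix. -/
noncomputable def frobNorm {n : ℕ} (A : Matrix (Fin n) (Fin n) ℝ) : ℝ :=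
  Real.sqrt (∑ i, ∑ j, (A i j) ^ 2)

namespace BlochIserles

open Complex

variable {ι : Type*}

lemma conjTranspose_map_ofReal (X : Matrix ι ι ℝ) : (X.map ofReal)ᴴ = Xᵀ.map ofReal := by
  ext i j
  simp

lemma transpose_map_ofReal_eq_neg {X : Matrix ι ι ℝ} (hX : Xᵀ = -X) :
    (X.map ofReal)ᵀ = -X.map ofReal := by
  rw [← transpose_map, hX, Matrix.map_neg _ ofReal_neg]

lemma conjTranspose_map_ofReal_eq_neg {X : Matrix ι ι ℝ} (hX : Xᵀ = -X) :
    (X.map ofReal)ᴴ = -X.map ofReal := by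
  rw [conjTranspose_map_ofReal, hX, Matrix.map_neg _ ofReal_neg]

variable [Fintype ι]

noncomputable def frobeniusSq (X : Matrix ι ι ℂ) : ℝ :=
  ∑ i, ∑ j, normSq (X i j)

lemma ofReal_frobeniusSq (X : Matrix ι ι ℂ) : (frobeniusSq X : ℂ) = trace (Xᴴ * X) := by
  simp only [frobeniusSq, trace, diag_apply, mul_apply, conjTranspose_apply, ofReal_sum,
    normSq_eq_conj_mul_self, RCLike.star_def]
  exact Finset.sum_comm

lemma frobeniusSq_conjStarAlgAut [DecidableEq ι] (U : unitaryGroup ι ℂ) (X : Matrix ι ι ℂ) :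
    frobeniusSq (Unitary.conjStarAlgAut ℂ _ U X) = frobeniusSq X := by
  have hU : star (U : Matrix ι ι ℂ) * U = 1 := Unitary.coe_star_mul_self U
  apply ofReal_injective
  rw [ofReal_frobeniusSq, ofReal_frobeniusSq, Unitary.conjStarAlgAut_apply,
    ← star_eq_conjTranspose, ← star_eq_conjTranspose]
  simp only [star_mul, star_star, Matrix.mul_assoc]
  rw [← Matrix.mul_assoc (star (U : Matrix ι ι ℂ)), hU, Matrix.one_mul, trace_mul_comm,
    Matrix.mul_assoc, Matrix.mul_assoc, hU, Matrix.mul_one]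

lemma frobeniusSq_smul (c : ℂ) (X : Matrix ι ι ℂ) :
    frobeniusSq (c • X) = normSq c * frobeniusSq X := by
  simp [frobeniusSq, Finset.mul_sum]

lemma frobeniusSq_diagonal [DecidableEq ι] (μ : ι → ℝ) :
    frobeniusSq (diagonal fun i => (μ i : ℂ)) = ∑ i, μ i ^ 2 := by
  simp [frobeniusSq, diagonal_apply, apply_ite normSq, sq]

lemma frobeniusSq_map_ofReal (X : Matrix ι ι ℝ) :
    frobeniusSq (X.map ofReal) = ∑ i, ∑ j, X i j ^ 2 := by
  simp [frobeniusSq, sq]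

lemma frobeniusSq_diagonal_mul_sub_mul_diagonal [DecidableEq ι] (μ : ι → ℝ)
    (b : Matrix ι ι ℂ) :
    frobeniusSq ((diagonal fun i => (μ i : ℂ)) * b - b * diagonal fun i => (μ i : ℂ)) =
      ∑ j, ∑ k, (μ j - μ k) ^ 2 * normSq (b j k) := by
  refine Finset.sum_congr rfl fun j _ => Finset.sum_congr rfl fun k _ => ?_
  rw [Matrix.sub_apply, diagonal_mul, mul_diagonal, mul_comm (b j k), ← sub_mul, ← ofReal_sub,
    normSq_mul, normSq_ofReal, sq]

section SumOfSquares

variable (μ : ι → ℝ)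

lemma sq_sub_le_sum_sq_of_mul_nonneg {j k : ι} (hjk : j ≠ k) (hsign : 0 ≤ μ j * μ k) :
    (μ j - μ k) ^ 2 ≤ ∑ i, μ i ^ 2 := by
  have := Finset.add_le_sum (f := fun i => μ i ^ 2) (fun i _ => sq_nonneg (μ i))
    (Finset.mem_univ j) (Finset.mem_univ k) hjk
  nlinarith

lemma sq_sub_le_sum_sq_of_four_indices {j k m l : ι} (hjk : j ≠ k) (hjm : j ≠ m) (hjl : j ≠ l)
    (hkm : k ≠ m) (hkl : k ≠ l) (hml : m ≠ l) (hm : μ m ^ 2 = μ j ^ 2) (hl : μ l ^ 2 = μ k ^ 2) :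
    (μ j - μ k) ^ 2 ≤ ∑ i, μ i ^ 2 := by
  classical
  have := Finset.sum_le_univ_sum_of_nonneg (s := {j, k, m, l}) (f := fun i => μ i ^ 2)
    (fun i => sq_nonneg (μ i))
  rw [Finset.sum_insert (by simp [hjk, hjm, hjl]), Finset.sum_insert (by simp [hkm, hkl]),
    Finset.sum_insert (by simp [hml]), Finset.sum_singleton, hm, hl] at this
  nlinarith [sq_nonneg (μ j + μ k)]

lemma sq_sub_le_sum_sq {b : Matrix ι ι ℂ} (hb : bᴴ = -b) (hneg : ∀ k, ∃ m, μ m = -μ k)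
    (hsimple : ∀ j k, μ k = -μ j → (∀ m, μ m = μ j → m = j) → b j k = 0)
    {j k : ι} (hjk : b j k ≠ 0) : (μ j - μ k) ^ 2 ≤ ∑ i, μ i ^ 2 := by
  rcases eq_or_ne j k with rfl | hne
  · rw [sub_self, sq, zero_mul]
    positivity
  rcases le_or_gt 0 (μ j * μ k) with hsign | hsign
  · exact sq_sub_le_sum_sq_of_mul_nonneg μ hne hsign
  have hj0 : μ j ≠ 0 := by rintro h; simp [h] at hsign
  have hk0 : μ k ≠ 0 := by rintro h; simp [h] at hsign
  have hjk' : μ j ≠ μ k := by rintro h; rw [h] at hsign; nlinarith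
  by_cases hopp : μ k = -μ j
  · have hkj : b k j ≠ 0 := by
      rw [← neg_ne_zero, ← Matrix.neg_apply, ← hb, conjTranspose_apply, star_ne_zero]
      exact hjk
    obtain ⟨j', hj', hj'j⟩ : ∃ j', μ j' = μ j ∧ j' ≠ j := by
      by_contra! h
      exact hjk (hsimple j k hopp h)
    obtain ⟨k', hk', hk'k⟩ : ∃ k', μ k' = μ k ∧ k' ≠ k := by
      by_contra! h
      exact hkj (hsimple k j (by rw [hopp, neg_neg]) h)
    refine sq_sub_le_sum_sq_of_four_indices μ (m := j') (l := k') hne hj'j.symm ?_ ?_ hk'k.symm ?_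
      (by rw [hj']) (by rw [hk'])
    all_goals rintro rfl; exact hj0 (by linarith)
  · obtain ⟨m, hm⟩ := hneg j
    obtain ⟨l, hl⟩ := hneg k
    refine sq_sub_le_sum_sq_of_four_indices μ (m := m) (l := l) hne ?_ ?_ ?_ ?_ ?_
      (by rw [hm, neg_sq]) (by rw [hl, neg_sq])
    all_goals rintro rfl
    all_goals first
      | exact hopp (by linarith)
      | exact hj0 (by linarith)
      | exact hk0 (by linarith)
      | exact hjk' (by linarith)

lemma sum_sq_sub_mul_normSq_le {b : Matrix ι ι ℂ} (hb : bᴴ = -b) (hneg : ∀ k, ∃ m, μ m = -μ k)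
    (hsimple : ∀ j k, μ k = -μ j → (∀ m, μ m = μ j → m = j) → b j k = 0) :
    ∑ j, ∑ k, (μ j - μ k) ^ 2 * normSq (b j k) ≤ (∑ i, μ i ^ 2) * frobeniusSq b := by
  rw [frobeniusSq, Finset.mul_sum]
  refine Finset.sum_le_sum fun j _ => ?_
  rw [Finset.mul_sum]
  refine Finset.sum_le_sum fun k _ => ?_
  rcases eq_or_ne (b j k) 0 with h | h
  · simp [h]
  · exact mul_le_mul_of_nonneg_right (sq_sub_le_sum_sq μ hb hneg hsimple h) (normSq_nonneg _)

end SumOfSquares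

lemma transpose_mul_mul_self_apply_self {N : Matrix ι ι ℂ} (hN : Nᵀ = -N) (V : Matrix ι ι ℂ)
    (j : ι) : (Vᵀ * N * V) j j = 0 := by
  have hskew : (Vᵀ * N * V)ᵀ = -(Vᵀ * N * V) := by
    rw [transpose_mul, transpose_mul, transpose_transpose, hN, Matrix.neg_mul, Matrix.mul_neg,
      Matrix.mul_assoc]
  have := congrFun (congrFun hskew j) j
  rw [transpose_apply, Matrix.neg_apply] at this
  linear_combination this / 2

section Eigenbasis

/- `Uᴴᵀ` is the entrywise conjugate of `U`, and `Uᵀ * U` is the change of basis from `Uᴴᵀ` to `U`. -/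

variable [DecidableEq ι] {H U : Matrix ι ι ℂ} {μ : ι → ℝ}

lemma transpose_mul_self_apply_eq_zero (hH : Hᵀ = -H)
    (hHU : H * U = U * diagonal fun i => (μ i : ℂ)) {m k : ι} (hmk : μ m ≠ -μ k) :
    (Uᵀ * U) m k = 0 := by
  set D : Matrix ι ι ℂ := diagonal fun i => (μ i : ℂ)
  have hcomm : Uᵀ * U * D = -(D * (Uᵀ * U)) := by
    calc Uᵀ * U * D = Uᵀ * (H * U) := by rw [hHU, Matrix.mul_assoc]
      _ = (Hᵀ * U)ᵀ * U := by rw [transpose_mul, transpose_transpose, Matrix.mul_assoc]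
      _ = -(D * (Uᵀ * U)) := by
        rw [hH, Matrix.neg_mul, hHU, transpose_neg, transpose_mul, diagonal_transpose,
          Matrix.neg_mul, Matrix.mul_assoc]
  have hentry := congrFun (congrFun hcomm m) k
  simp only [D, mul_diagonal, Matrix.neg_apply, diagonal_mul] at hentry
  have : ((μ m + μ k : ℝ) : ℂ) * (Uᵀ * U) m k = 0 := by
    push_cast
    linear_combination hentry
  refine (mul_eq_zero.1 this).resolve_left ?_
  exact_mod_cast fun h => hmk (by linarith)

lemma conjTranspose_transpose_mul_transpose_mul_self (hU : U * star U = 1) :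
    Uᴴᵀ * (Uᵀ * U) = U := by
  rw [← Matrix.mul_assoc, ← transpose_mul, ← star_eq_conjTranspose, hU, transpose_one,
    Matrix.one_mul]

lemma exists_eq_neg (hU : U ∈ unitaryGroup ι ℂ) (hH : Hᵀ = -H)
    (hHU : H * U = U * diagonal fun i => (μ i : ℂ)) (k : ι) : ∃ m, μ m = -μ k := by
  by_contra! hk
  have hcol : ∀ i, U i k = 0 := fun i => by
    rw [← conjTranspose_transpose_mul_transpose_mul_self (mem_unitaryGroup_iff.1 hU), mul_apply]
    exact Finset.sum_eq_zero fun m _ => by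
      rw [transpose_mul_self_apply_eq_zero hH hHU (hk m), mul_zero]
  have := congrFun (congrFun (mem_unitaryGroup_iff'.1 hU) k) k
  simp [mul_apply, hcol] at this

lemma star_mul_mul_apply_eq_zero_of_simple (hU : U * star U = 1) (hH : Hᵀ = -H)
    (hHU : H * U = U * diagonal fun i => (μ i : ℂ)) {N : Matrix ι ι ℂ} (hN : Nᵀ = -N)
    {j k : ι} (hjk : μ k = -μ j) (hj : ∀ m, μ m = μ j → m = j) :
    (star U * N * U) j k = 0 := by
  set V := Uᴴᵀ
  have hb : star U * N * U = Vᵀ * N * V * (Uᵀ * U) := by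
    rw [Matrix.mul_assoc _ V, conjTranspose_transpose_mul_transpose_mul_self hU,
      transpose_transpose, star_eq_conjTranspose]
  rw [hb, mul_apply, Finset.sum_eq_single j, transpose_mul_mul_self_apply_self hN, zero_mul]
  · intro m _ hmj
    rw [transpose_mul_self_apply_eq_zero hH hHU (fun h => hmj (hj m (by linarith))), mul_zero]
  · simp

lemma _root_.Matrix.IsHermitian.mul_eigenvectorUnitary (hH : H.IsHermitian) :
    H * hH.eigenvectorUnitary =
      hH.eigenvectorUnitary * diagonal fun i => (hH.eigenvalues i : ℂ) := by
  have hdiag : star (hH.eigenvectorUnitary : Matrix ι ι ℂ) * H * hH.eigenvectorUnitary =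
      diagonal fun i => (hH.eigenvalues i : ℂ) := by
    simpa [Function.comp_def] using hH.conjStarAlgAut_star_eigenvectorUnitary
  rw [← hdiag, ← Matrix.mul_assoc, ← Matrix.mul_assoc,
    mem_unitaryGroup_iff.1 hH.eigenvectorUnitary.2, Matrix.one_mul]

theorem frobeniusSq_commutator_le {M N : Matrix ι ι ℂ} (hMH : Mᴴ = -M) (hMT : Mᵀ = -M)
    (hNH : Nᴴ = -N) (hNT : Nᵀ = -N) :
    frobeniusSq (M * N - N * M) ≤ frobeniusSq M * frobeniusSq N := by
  have hH : (I • M).IsHermitian := by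
    rw [IsHermitian, conjTranspose_smul, hMH, star_def, conj_I, smul_neg, neg_smul, neg_neg]
  have hHT : (I • M)ᵀ = -(I • M) := by rw [transpose_smul, hMT, smul_neg]
  have hHU := hH.mul_eigenvectorUnitary
  set U := hH.eigenvectorUnitary
  set μ := hH.eigenvalues
  set φ := Unitary.conjStarAlgAut ℂ (Matrix ι ι ℂ) (star U)
  have hdiag : φ (I • M) = diagonal fun i => (μ i : ℂ) :=
    hH.conjStarAlgAut_star_eigenvectorUnitary
  have hφM : φ M = (-I) • diagonal fun i => (μ i : ℂ) := by
    rw [← hdiag, ← map_smul, smul_smul, neg_mul, I_mul_I, neg_neg, one_smul]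
  have hμ : ∑ i, μ i ^ 2 = frobeniusSq M := by
    rw [← frobeniusSq_diagonal, ← hdiag, frobeniusSq_conjStarAlgAut, frobeniusSq_smul, normSq_I,
      one_mul]
  have hb : (φ N)ᴴ = -φ N := by
    rw [← star_eq_conjTranspose, ← map_star, star_eq_conjTranspose, hNH, map_neg]
  calc frobeniusSq (M * N - N * M) = frobeniusSq (φ (M * N - N * M)) :=
        (frobeniusSq_conjStarAlgAut _ _).symm
    _ = ∑ j, ∑ k, (μ j - μ k) ^ 2 * normSq (φ N j k) := by
        rw [map_sub, map_mul, map_mul, hφM, Matrix.smul_mul, Matrix.mul_smul, ← smul_sub,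
          frobeniusSq_smul, frobeniusSq_diagonal_mul_sub_mul_diagonal, normSq_neg, normSq_I,
          one_mul]
    _ ≤ (∑ i, μ i ^ 2) * frobeniusSq (φ N) :=
        sum_sq_sub_mul_normSq_le μ hb (exists_eq_neg U.2 hHT hHU) fun j k hjk hj => by
          rw [Unitary.conjStarAlgAut_star_apply]
          exact star_mul_mul_apply_eq_zero_of_simple (mem_unitaryGroup_iff.1 U.2) hHT hHU hNT
            hjk hj
    _ = frobeniusSq M * frobeniusSq N := by rw [hμ, frobeniusSq_conjStarAlgAut]

end Eigenbasis

end BlochIserles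

open BlochIserles Complex

/-- The Bloch–Iserles inequality: for skew-symmetric matrices,
`‖AB − BA‖_F ≤ ‖A‖_F ‖B‖_F`. -/
theorem bloch_iserles {n : ℕ} (A B : Matrix (Fin n) (Fin n) ℝ)
    (hA : Aᵀ = -A) (hB : Bᵀ = -B) :
    frobNorm (A * B - B * A) ≤ frobNorm A * frobNorm B := by
  have hmap : (A * B - B * A).map ofReal =
      A.map ofReal * B.map ofReal - B.map ofReal * A.map ofReal := by
    ext i j
    simp [mul_apply]
  have hsq := frobeniusSq_commutator_le (conjTranspose_map_ofReal_eq_neg hA)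
    (transpose_map_ofReal_eq_neg hA) (conjTranspose_map_ofReal_eq_neg hB)
    (transpose_map_ofReal_eq_neg hB)
  rw [← hmap, frobeniusSq_map_ofReal, frobeniusSq_map_ofReal, frobeniusSq_map_ofReal] at hsq
  rw [frobNorm, frobNorm, frobNorm, ← Real.sqrt_mul (by positivity)]
  exact Real.sqrt_le_sqrt hsq
end

section
/- Let Φ : V × V → W be a symmetric bilinear map between real inner product spaces with V finite-dimensional. Then sup over unit vectors u, v of ‖Φ(u,v)‖ equals sup over unit vectors u of ‖Φ(u,u)‖. -/
/-!
By polarisation, `4 Φ(u, v) = Φ(u + v, u + v) - Φ(u - v, u - v)`, so any bound `M` for `‖Φ(w, w)‖`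
on the unit sphere gives `4 ‖Φ(u, v)‖ ≤ M (‖u + v‖² + ‖u - v‖²) = 4M` for unit `u`, `v` by the
parallelogram law. Hence the two sets have the same upper bounds, and in `ℝ` that determines the
supremum, junk value `0` for empty or unbounded sets included.
-/

theorem Real.sSup_eq_of_upperBounds_eq {s t : Set ℝ} (h : upperBounds s = upperBounds t) :
    sSup s = sSup t := by
  by_cases hs : s.Nonempty ∧ BddAbove s
  · have hlub : IsLUB t (sSup s) := (isLUB_congr h).1 (isLUB_csSup hs.1 hs.2)
    exact (hlub.csSup_eq hlub.nonempty).symm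
  by_cases ht : t.Nonempty ∧ BddAbove t
  · have hlub : IsLUB s (sSup t) := (isLUB_congr h).2 (isLUB_csSup ht.1 ht.2)
    exact hlub.csSup_eq hlub.nonempty
  rw [Real.sSup_def, Real.sSup_def, dif_neg hs, dif_neg ht]

theorem LinearMap.polarization {R M N : Type*} [CommRing R] [AddCommGroup M] [Module R M]
    [AddCommGroup N] [Module R N] (Φ : M →ₗ[R] M →ₗ[R] N) (hΦ : ∀ u v, Φ u v = Φ v u)
    (u v : M) : Φ (u + v) (u + v) - Φ (u - v) (u - v) = (4 : R) • Φ u v := by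
  simp only [map_add, map_sub, LinearMap.add_apply, LinearMap.sub_apply, hΦ v u]
  module

section

variable {V W : Type*} [NormedAddCommGroup W] [NormedSpace ℝ W]

theorem LinearMap.norm_apply_self_le_of_forall_norm_eq_one [NormedAddCommGroup V]
    [NormedSpace ℝ V] (Φ : V →ₗ[ℝ] V →ₗ[ℝ] W) {M : ℝ} (hM : ∀ u, ‖u‖ = 1 → ‖Φ u u‖ ≤ M)
    (w : V) : ‖Φ w w‖ ≤ M * ‖w‖ ^ 2 := by
  rcases eq_or_ne w 0 with rfl | hw
  · simp
  set u := ‖w‖⁻¹ • w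
  calc ‖Φ w w‖ = ‖w‖ ^ 2 * ‖Φ u u‖ := by
        simp only [u, map_smul, LinearMap.smul_apply, norm_smul, norm_inv, norm_norm]
        field_simp
    _ ≤ ‖w‖ ^ 2 * M := by gcongr; exact hM u (norm_smul_inv_norm hw)
    _ = M * ‖w‖ ^ 2 := mul_comm _ _

theorem LinearMap.two_mul_norm_apply_le [NormedAddCommGroup V] [InnerProductSpace ℝ V]
    (Φ : V →ₗ[ℝ] V →ₗ[ℝ] W) (hΦ : ∀ u v, Φ u v = Φ v u) {M : ℝ}
    (hM : ∀ w, ‖Φ w w‖ ≤ M * ‖w‖ ^ 2) (u v : V) :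
    2 * ‖Φ u v‖ ≤ M * (‖u‖ ^ 2 + ‖v‖ ^ 2) := by
  have h4 : 4 * ‖Φ u v‖ ≤ 2 * (M * (‖u‖ ^ 2 + ‖v‖ ^ 2)) :=
    calc 4 * ‖Φ u v‖ = ‖Φ (u + v) (u + v) - Φ (u - v) (u - v)‖ := by
          rw [Φ.polarization hΦ, norm_smul]; norm_num
      _ ≤ ‖Φ (u + v) (u + v)‖ + ‖Φ (u - v) (u - v)‖ := norm_sub_le _ _
      _ ≤ M * ‖u + v‖ ^ 2 + M * ‖u - v‖ ^ 2 := add_le_add (hM _) (hM _)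
      _ = 2 * (M * (‖u‖ ^ 2 + ‖v‖ ^ 2)) := by
          rw [← mul_add, parallelogram_law_with_norm ℝ u v]; ring
  linarith

end

theorem symmetric_bilinear_sup_diag_general {V W : Type*}
    [NormedAddCommGroup V] [InnerProductSpace ℝ V]
    [NormedAddCommGroup W] [NormedSpace ℝ W]
    (Φ : V →ₗ[ℝ] V →ₗ[ℝ] W) (hsymm : ∀ u v : V, Φ u v = Φ v u) :
    sSup {x : ℝ | ∃ u v : V, ‖u‖ = 1 ∧ ‖v‖ = 1 ∧ x = ‖Φ u v‖} =
      sSup {x : ℝ | ∃ u : V, ‖u‖ = 1 ∧ x = ‖Φ u u‖} := by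
  refine Real.sSup_eq_of_upperBounds_eq (subset_antisymm ?_ ?_)
  · exact upperBounds_mono_set fun _ ⟨u, hu, hx⟩ ↦ ⟨u, u, hu, hu, hx⟩
  · rintro M hM _ ⟨u, v, hu, hv, rfl⟩
    have hdiag := Φ.norm_apply_self_le_of_forall_norm_eq_one fun w hw ↦ hM ⟨w, hw, rfl⟩
    have hoff := Φ.two_mul_norm_apply_le hsymm hdiag u v
    rw [hu, hv] at hoff
    linarith

/-- For a symmetric bilinear map `Φ` on a finite-dimensional real inner product
space with values in a normed space, the supremum of `‖Φ(u, v)‖` over unit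
vectors `u, v` equals the supremum of `‖Φ(u, u)‖` over unit vectors `u`. -/
theorem symmetric_bilinear_sup_diag {V W : Type*}
    [NormedAddCommGroup V] [InnerProductSpace ℝ V] [FiniteDimensional ℝ V]
    [NormedAddCommGroup W] [NormedSpace ℝ W]
    (Φ : V →ₗ[ℝ] V →ₗ[ℝ] W) (hsymm : ∀ u v : V, Φ u v = Φ v u) :
    sSup {x : ℝ | ∃ u v : V, ‖u‖ = 1 ∧ ‖v‖ = 1 ∧ x = ‖Φ u v‖} =
      sSup {x : ℝ | ∃ u : V, ‖u‖ = 1 ∧ x = ‖Φ u u‖} :=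
  symmetric_bilinear_sup_diag_general Φ hsymm
end

section
/- Let f : ℝⁿ → ℝ be convex, α-smooth (0 ⪯ Hess f ⪯ α·I), with a minimizer x*. Then gradient descent with step size 1/α starting at x₀ satisfies f(x_t) − f(x*) ≤ 2α‖x₀ − x*‖²/(t+4). -/
/-!
Smoothness gives the sufficient decrease `f x_k - f x_{k+1} ≥ ‖∇f x_k‖² / (2α)`, and convexity
gives `δ_k := f x_k - f x* ≤ ⟪∇f x_k, x_k - x*⟫`. Together they show that each step does not
increase `‖x_k - x*‖`, so `δ_k ≤ ‖∇f x_k‖ ‖x_0 - x*‖` and hence `δ_k² ≤ c (δ_k - δ_{k+1})` with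
`c = 2α‖x_0 - x*‖²`. Since also `δ_0 ≤ c / 4`, this recurrence forces `δ_k ≤ c / (k + 4)`.
-/

open Set InnerProductSpace RealInnerProductSpace

section Calculus

variable {E : Type*} [NormedAddCommGroup E] [NormedSpace ℝ E] {f : E → ℝ}

theorem ConvexOn.add_fderiv_sub_le {s : Set E} (hf : ConvexOn ℝ s f) {a y : E} (ha : a ∈ s)
    (hy : y ∈ s) (hfa : DifferentiableAt ℝ f a) : f a + fderiv ℝ f a (y - a) ≤ f y := by
  let ℓ : ℝ →ᵃ[ℝ] E := AffineMap.lineMap a y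
  have hline : ConvexOn ℝ (ℓ ⁻¹' s) (f ∘ ℓ) := hf.comp_affineMap ℓ
  have hderiv : HasDerivAt (f ∘ ℓ) (fderiv ℝ f a (y - a)) 0 := by
    have hfa' : HasFDerivAt f (fderiv ℝ f a) (ℓ 0) := by simpa [ℓ] using hfa.hasFDerivAt
    exact hfa'.comp_hasDerivAt 0 AffineMap.hasDerivAt_lineMap
  have := hline.le_slope_of_hasDerivAt (x := 0) (y := 1) (by simpa [ℓ]) (by simpa [ℓ])
    zero_lt_one hderiv
  simp only [slope_def_field, Function.comp_apply, ℓ, AffineMap.lineMap_apply_zero,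
    AffineMap.lineMap_apply_one, sub_zero, div_one] at this
  linarith

theorem fderiv_add_smul_apply_le_of_lipschitz {L : ℝ}
    (hlip : ∀ x y, ‖fderiv ℝ f y - fderiv ℝ f x‖ ≤ L * ‖y - x‖) (a v : E) {t : ℝ} (ht : 0 ≤ t) :
    fderiv ℝ f (a + t • v) v ≤ fderiv ℝ f a v + L * t * ‖v‖ ^ 2 := by
  have := calc (fderiv ℝ f (a + t • v) - fderiv ℝ f a) v
      ≤ ‖fderiv ℝ f (a + t • v) - fderiv ℝ f a‖ * ‖v‖ :=
        (Real.le_norm_self _).trans (ContinuousLinearMap.le_opNorm _ _)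
    _ ≤ L * ‖t • v‖ * ‖v‖ := by
        gcongr
        simpa using hlip a (a + t • v)
    _ = L * t * ‖v‖ ^ 2 := by rw [norm_smul, Real.norm_of_nonneg ht]; ring
  rw [sub_apply] at this
  linarith

theorem le_add_fderiv_add_sq_of_lipschitz {L : ℝ} (hf : Differentiable ℝ f)
    (hlip : ∀ x y, ‖fderiv ℝ f y - fderiv ℝ f x‖ ≤ L * ‖y - x‖) (x y : E) :
    f y ≤ f x + fderiv ℝ f x (y - x) + L / 2 * ‖y - x‖ ^ 2 := by
  set v := y - x
  have hderiv (t : ℝ) : HasDerivAt (fun s : ℝ ↦ f (x + s • v)) (fderiv ℝ f (x + t • v) v) t := by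
    have : HasDerivAt (fun s : ℝ ↦ x + s • v) v t := by
      simpa using ((hasDerivAt_id t).smul_const v).const_add x
    exact (hf _).hasFDerivAt.comp_hasDerivAt t this
  have hbound (t : ℝ) :
      HasDerivAt (fun s : ℝ ↦ f x + s * fderiv ℝ f x v + L / 2 * s ^ 2 * ‖v‖ ^ 2)
        (fderiv ℝ f x v + L * t * ‖v‖ ^ 2) t := by
    refine ((((hasDerivAt_id t).mul_const (fderiv ℝ f x v)).const_add (f x)).add
      (((hasDerivAt_pow 2 t).const_mul (L / 2)).mul_const (‖v‖ ^ 2))).congr_deriv ?_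
    simp only [Nat.cast_ofNat]
    ring
  have := image_le_of_deriv_right_le_deriv_boundary (a := 0) (b := 1)
    (fun t _ ↦ (hderiv t).continuousAt.continuousWithinAt) (fun t _ ↦ (hderiv t).hasDerivWithinAt)
    (by simp) (fun t _ ↦ (hbound t).continuousAt.continuousWithinAt)
    (fun t _ ↦ (hbound t).hasDerivWithinAt)
    (fun t ht ↦ fderiv_add_smul_apply_le_of_lipschitz hlip x v ht.1)
    (right_mem_Icc.2 zero_le_one)
  simpa [v] using this

theorem IsLocalMin.apply_sub_le_of_lipschitz {L : ℝ} {x : E} (hx : IsLocalMin f x)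
    (hf : Differentiable ℝ f) (hlip : ∀ x y, ‖fderiv ℝ f y - fderiv ℝ f x‖ ≤ L * ‖y - x‖)
    (y : E) : f y - f x ≤ L / 2 * ‖y - x‖ ^ 2 := by
  have := le_add_fderiv_add_sq_of_lipschitz hf hlip x y
  rw [hx.fderiv_eq_zero, zero_apply] at this
  linarith

end Calculus

section Gradient

variable {E : Type*} [NormedAddCommGroup E] [InnerProductSpace ℝ E]

theorem norm_sub_smul_le_of_sq_div_le_inner {α : ℝ} (hα : 0 < α) {g w : E}
    (h : ‖g‖ ^ 2 / (2 * α) ≤ ⟪g, w⟫) : ‖w - (1 / α) • g‖ ≤ ‖w‖ := by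
  refine (sq_le_sq₀ (norm_nonneg _) (norm_nonneg _)).mp ?_
  rw [norm_sub_sq_real, real_inner_smul_right, norm_smul, Real.norm_of_nonneg (by positivity),
    real_inner_comm]
  have : (1 / α) ^ 2 * ‖g‖ ^ 2 ≤ 2 * (1 / α) * ⟪g, w⟫ := by
    calc (1 / α) ^ 2 * ‖g‖ ^ 2 = 2 * (1 / α) * (‖g‖ ^ 2 / (2 * α)) := by field_simp
      _ ≤ 2 * (1 / α) * ⟪g, w⟫ := by gcongr
  nlinarith

variable [CompleteSpace E] {f : E → ℝ}

theorem ConvexOn.sub_le_inner_gradient (hf : ConvexOn ℝ univ f) {x : E}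
    (hfx : DifferentiableAt ℝ f x) (y : E) : f x - f y ≤ ⟪gradient f x, x - y⟫ := by
  have := hf.add_fderiv_sub_le (mem_univ x) (mem_univ y) hfx
  rw [← neg_sub x y, map_neg, ← inner_gradient_left] at this
  linarith

theorem apply_sub_smul_gradient_le_of_lipschitz {α : ℝ} (hα : 0 < α) (hf : Differentiable ℝ f)
    (hlip : ∀ x y, ‖fderiv ℝ f y - fderiv ℝ f x‖ ≤ α * ‖y - x‖) (x : E) :
    f (x - (1 / α) • gradient f x) ≤ f x - ‖gradient f x‖ ^ 2 / (2 * α) := by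
  have := le_add_fderiv_add_sq_of_lipschitz hf hlip x (x - (1 / α) • gradient f x)
  rw [sub_sub_cancel_left, map_neg, map_smul, ← inner_gradient_left, norm_neg, norm_smul,
    real_inner_self_eq_norm_sq, smul_eq_mul, Real.norm_of_nonneg (by positivity)] at this
  convert this using 1
  field_simp
  ring

end Gradient

theorem le_div_add_four_of_sq_le_mul_sub {δ : ℕ → ℝ} {c : ℝ} (hδ : ∀ k, 0 ≤ δ k)
    (h₀ : 4 * δ 0 ≤ c) (hstep : ∀ k, δ k ^ 2 ≤ c * (δ k - δ (k + 1))) (k : ℕ) :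
    δ k ≤ c / (k + 4) := by
  rcases (le_trans (by linarith [hδ 0]) h₀ : (0 : ℝ) ≤ c).eq_or_lt with rfl | hc
  · simpa using pow_eq_zero_iff (n := 2) two_ne_zero |>.mp
      (le_antisymm (by simpa using hstep k) (sq_nonneg _)) |>.le
  induction k with
  | zero => rw [le_div_iff₀ (by norm_num)]; push_cast; linarith
  | succ k ih =>
    set m := c / (k + 4) with hm
    have hm_le : m ≤ c / 2 := div_le_div_of_nonneg_left hc.le two_pos (by linarith)
    -- `d ↦ c d - d²` is monotone on `[0, c/2]`
    have hmono : c * δ k - δ k ^ 2 ≤ c * m - m ^ 2 := by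
      nlinarith [mul_nonneg (sub_nonneg.2 ih) (by linarith [hδ k] : 0 ≤ c - m - δ k)]
    have hpeak : c * m - m ^ 2 ≤ c * (c / (k + 1 + 4)) := by
      rw [hm]
      field_simp
      nlinarith
    have := hstep k
    push_cast
    exact le_of_mul_le_mul_left (by linarith) hc

/-- Convergence of gradient descent for convex `α`-smooth functions: with
step-size `1/α`, `f(x_t) − f(x*) ≤ 2α‖x₀ − x*‖² / (t + 4)`. -/
theorem gradient_descent_convex {n : ℕ}
    (f : EuclideanSpace ℝ (Fin n) → ℝ) (α : ℝ) (hα : 0 < α)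
    (hf : ContDiff ℝ 2 f)
    (hconv : ConvexOn ℝ Set.univ f)
    (hhess : ∀ x, ‖fderiv ℝ (fderiv ℝ f) x‖ ≤ α)
    (xstar : EuclideanSpace ℝ (Fin n)) (hmin : ∀ y, f xstar ≤ f y)
    (x : ℕ → EuclideanSpace ℝ (Fin n))
    (hstep : ∀ k, x (k + 1) = x k - (1 / α) • gradient f (x k))
    (t : ℕ) :
    f (x t) - f xstar ≤ 2 * α * ‖x 0 - xstar‖ ^ 2 / (t + 4) := by
  have hdf : Differentiable ℝ f := hf.differentiable two_ne_zero
  have hlip (a b) : ‖fderiv ℝ f b - fderiv ℝ f a‖ ≤ α * ‖b - a‖ :=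
    convex_univ.norm_image_sub_le_of_norm_fderiv_le
      (fun z _ ↦ (hf.fderiv_right one_add_one_eq_two.le).differentiable one_ne_zero z)
      (fun z _ ↦ hhess z) trivial trivial
  have hdecrease (k) : f (x (k + 1)) ≤ f (x k) - ‖gradient f (x k)‖ ^ 2 / (2 * α) :=
    hstep k ▸ apply_sub_smul_gradient_le_of_lipschitz hα hdf hlip (x k)
  have hconvex (k) := hconv.sub_le_inner_gradient (hdf (x k)) xstar
  have hdist : Antitone fun k ↦ ‖x k - xstar‖ := antitone_nat_of_succ_le fun k ↦ by
    rw [hstep k, sub_right_comm]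
    exact norm_sub_smul_le_of_sq_div_le_inner hα
      (by linarith [hdecrease k, hconvex k, hmin (x (k + 1))])
  refine le_div_add_four_of_sq_le_mul_sub (fun k ↦ sub_nonneg.2 (hmin _)) ?_ (fun k ↦ ?_) t
  · linarith [IsLocalMin.apply_sub_le_of_lipschitz (.of_forall hmin) hdf hlip (x 0)]
  · calc (f (x k) - f xstar) ^ 2 ≤ (‖gradient f (x k)‖ * ‖x 0 - xstar‖) ^ 2 := by
          gcongr
          · exact sub_nonneg.2 (hmin _)
          · exact (hconvex k).trans ((real_inner_le_norm _ _).trans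
              (mul_le_mul_of_nonneg_left (hdist (Nat.zero_le k)) (norm_nonneg _)))
      _ = 2 * α * ‖x 0 - xstar‖ ^ 2 * (‖gradient f (x k)‖ ^ 2 / (2 * α)) := by
          field_simp
      _ ≤ 2 * α * ‖x 0 - xstar‖ ^ 2 * (f (x k) - f xstar - (f (x (k + 1)) - f xstar)) := by
          gcongr
          linarith [hdecrease k]
end
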